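/- Let k be a field and R a commutative graded k-algebra with grading 𝒜 : ℕ → Submodule k R, 𝒜 0 = k·1 (R is not assumed to be a domain). If R is a Hilbert–Serre ring, then the Krull dimension of R is at most the Hilbert–Serre dimension: ringKrullDim R ≤ d(R). -/

import Mathlib

/-- The boundedness condition defining Hilbert–Serre rings: for all `t ∈ (0,1)` the
Poincaré series `∑ F n * tⁿ` converges and `(1 - t) ^ d` times its sum is bounded by a
uniform constant `C > 0`. -/
def HSBound (F : ℕ → ℕ) (d : ℕ) : Prop :=
  ∃ C : ℝ, 0 < C ∧ ∀ t : ℝ, t ∈ Set.Ioo (0 : ℝ) 1 →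
    Summable (fun n => (F n : ℝ) * t ^ n) ∧
      (1 - t) ^ d * (∑' n, (F n : ℝ) * t ^ n) ≤ C

/-- A graded algebra with grading `𝒜` is a *Hilbert–Serre ring* if every graded component
is finite dimensional over `k` and the Poincaré series `∑ dim_k (𝒜 n) tⁿ` satisfies the
boundedness condition `HSBound` for some `d`. -/
def IsHilbertSerre {k R : Type*} [Field k] [CommRing R] [Algebra k R]
    (𝒜 : ℕ → Submodule k R) : Prop :=
  (∀ n, FiniteDimensional k (𝒜 n)) ∧
    ∃ d, HSBound (fun n => Module.finrank k (𝒜 n)) d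

/-- The Hilbert–Serre dimension `d(R)`: the least `d` such that `(1-t)^d P_R(t)` is
bounded on `(0,1)`. -/
noncomputable def hsDim {k R : Type*} [Field k] [CommRing R] [Algebra k R]
    (𝒜 : ℕ → Submodule k R) : ℕ :=
  sInf {d | HSBound (fun n => Module.finrank k (𝒜 n)) d}

/-!
Let `p₀ < p₁ < ⋯ < pₘ` be a chain of primes and pick `aᵢ ∈ pᵢ₊₁ \ pᵢ`. These elements are
algebraically independent over `k` (already modulo `p₀`): peeling off `a₀` reduces to the chain
`p₁ < ⋯ < pₘ` modulo `p₁`. All `aᵢ` have degree at most some `D`, so the `(N + 1)ᵐ` monomials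
`∏ aᵢ^eᵢ` with `eᵢ ≤ N` are linearly independent elements of degree at most `DmN`. Hence
`(N + 1)ᵐ ≤ ∑_{n ≤ DmN} dim 𝒜 n`, while the Hilbert–Serre bound gives
`∑_{n ≤ a} dim 𝒜 n ≤ K (a + 1)ᵈ`. Letting `N → ∞` gives `m ≤ d`.
-/

lemma one_half_le_one_sub_pow {u : ℝ} (hu : 0 ≤ u) {n : ℕ} (hnu : n * u ≤ 1 / 2) :
    1 / 2 ≤ (1 - u) ^ n := by
  obtain rfl | hn := n.eq_zero_or_pos
  · norm_num
  have hu1 : u ≤ n * u := le_mul_of_one_le_left hu (by exact_mod_cast hn)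
  have := one_add_mul_le_pow (a := -u) (by linarith) n
  rw [← sub_eq_add_neg] at this
  linarith

/-- Evaluate at `t = 1 - 1/(2(a + 1))`, where `tⁿ ≥ 1/2` for all `n ≤ a`. -/
lemma sum_range_le_of_forall_one_sub_pow_mul_tsum_le {F : ℕ → ℕ} {d : ℕ} {C : ℝ}
    (hC : ∀ t ∈ Set.Ioo (0 : ℝ) 1, Summable (fun n => (F n : ℝ) * t ^ n) ∧
      (1 - t) ^ d * (∑' n, (F n : ℝ) * t ^ n) ≤ C) (a : ℕ) :
    ∑ n ∈ Finset.range (a + 1), (F n : ℝ) ≤ 2 ^ (d + 1) * C * ((a : ℝ) + 1) ^ d := by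
  set u : ℝ := 1 / (2 * (a + 1))
  have hu : 0 < u := by positivity
  have hau : a * u ≤ 1 / 2 := by
    rw [mul_one_div, div_le_div_iff₀ (by positivity) two_pos]; linarith
  have hu1 : u ≤ 1 / 2 := by
    rw [one_div_le_one_div (by positivity) two_pos]; linarith [a.cast_nonneg (α := ℝ)]
  obtain ⟨hsum, hbound⟩ := hC (1 - u) ⟨by linarith, by linarith⟩
  rw [sub_sub_cancel] at hbound
  have hinv : u ^ d * (2 * ((a : ℝ) + 1)) ^ d = 1 := by
    rw [← mul_pow, one_div_mul_cancel (by positivity), one_pow]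
  calc ∑ n ∈ Finset.range (a + 1), (F n : ℝ)
      ≤ 2 * ∑ n ∈ Finset.range (a + 1), (F n : ℝ) * (1 - u) ^ n := by
        rw [Finset.mul_sum]
        refine Finset.sum_le_sum fun n hn => ?_
        have hna : (n : ℝ) ≤ a := by exact_mod_cast Finset.mem_range_succ_iff.mp hn
        have := one_half_le_one_sub_pow hu.le ((mul_le_mul_of_nonneg_right hna hu.le).trans hau)
        nlinarith [(F n).cast_nonneg (α := ℝ)]
    _ ≤ 2 * ∑' n, (F n : ℝ) * (1 - u) ^ n := by
        gcongr
        exact hsum.sum_le_tsum _ fun n _ => mul_nonneg (by positivity) (pow_nonneg (by linarith) n)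
    _ = 2 * (u ^ d * ∑' n, (F n : ℝ) * (1 - u) ^ n) * (2 * ((a : ℝ) + 1)) ^ d := by
        rw [mul_assoc, mul_right_comm (u ^ d), hinv, one_mul]
    _ ≤ 2 * C * (2 * ((a : ℝ) + 1)) ^ d := by gcongr
    _ = 2 ^ (d + 1) * C * ((a : ℝ) + 1) ^ d := by rw [mul_pow]; ring

lemma HSBound.exists_sum_range_le {F : ℕ → ℕ} {d : ℕ} (h : HSBound F d) :
    ∃ K : ℕ, ∀ a, ∑ n ∈ Finset.range (a + 1), F n ≤ K * (a + 1) ^ d := by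
  obtain ⟨C, -, hC⟩ := h
  refine ⟨⌈(2 : ℝ) ^ (d + 1) * C⌉₊, fun a => ?_⟩
  have hceil : (2 : ℝ) ^ (d + 1) * C * ((a : ℝ) + 1) ^ d ≤
      ⌈(2 : ℝ) ^ (d + 1) * C⌉₊ * ((a : ℝ) + 1) ^ d := by
    gcongr; exact Nat.le_ceil _
  exact_mod_cast (sum_range_le_of_forall_one_sub_pow_mul_tsum_le hC a).trans hceil

lemma le_of_forall_pow_le_mul_pow {m d K : ℕ} (h : ∀ N, (N + 1) ^ m ≤ K * (N + 1) ^ d) :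
    m ≤ d := by
  by_contra! hdm
  have := (h K).trans_lt (Nat.mul_lt_mul_of_pos_right (Nat.lt_succ_self K) (by positivity))
  rw [← pow_succ'] at this
  exact absurd this (not_lt.mpr (Nat.pow_le_pow_right K.succ_pos hdm))

section Chain

open MvPolynomial

variable {k S : Type*} [Field k] [CommRing S] [Algebra k S]

lemma MvPolynomial.aeval_cons_eq_eval₂_finSuccEquiv {m : ℕ} (a : S) (y : Fin m → S)
    (f : MvPolynomial (Fin (m + 1)) k) :
    aeval (Fin.cons a y) f = (finSuccEquiv k m f).eval₂ (aeval y).toRingHom a := by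
  induction f using MvPolynomial.induction_on with
  | C r => simp [finSuccEquiv_apply]
  | add p q hp hq => simp [hp, hq]
  | mul_X p i hp =>
    refine Fin.cases ?_ (fun j => ?_) i <;>
      simp [hp, finSuccEquiv_X_zero, finSuccEquiv_X_succ]

lemma algebraicIndependent_mk_comp_iff {ι : Type*} (P : Ideal S) (x : ι → S) :
    AlgebraicIndependent k (Ideal.Quotient.mk P ∘ x) ↔
      ∀ f : MvPolynomial ι k, aeval x f ∈ P → f = 0 := by
  have h : aeval (Ideal.Quotient.mk P ∘ x) = (Ideal.Quotient.mkₐ k P).comp (aeval x) :=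
    (comp_aeval x (Ideal.Quotient.mkₐ k P)).symm
  simp only [algebraicIndependent_iff, h, AlgHom.comp_apply, Ideal.Quotient.mkₐ_eq_mk,
    Ideal.Quotient.eq_zero_iff_mem]

/-- Write `f` as `X₀ʳ g` with `g(0, X₁, …) ≠ 0`: since `a ∉ P` the factor `aʳ` can be cancelled,
and since `a ∈ Q` the value of `g` is congruent modulo `Q` to that of `g(0, X₁, …)`. -/
lemma algebraicIndependent_mk_cons {P Q : Ideal S} [P.IsPrime] (hPQ : P ≤ Q) {a : S}
    (haQ : a ∈ Q) (haP : a ∉ P) {m : ℕ} {y : Fin m → S}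
    (hy : AlgebraicIndependent k (Ideal.Quotient.mk Q ∘ y)) :
    AlgebraicIndependent k (Ideal.Quotient.mk P ∘ Fin.cons a y) := by
  rw [algebraicIndependent_mk_comp_iff] at hy ⊢
  intro f hf
  by_contra hf0
  set φ := (aeval (R := k) y).toRingHom
  obtain ⟨g, hfg, hXg⟩ := Polynomial.exists_eq_pow_rootMultiplicity_mul_and_not_dvd
    (finSuccEquiv k m f) (by simpa using hf0) 0
  simp only [map_zero, sub_zero, Polynomial.X_dvd_iff] at hfg hXg
  have hgP : g.eval₂ φ a ∈ P := by
    rw [aeval_cons_eq_eval₂_finSuccEquiv, hfg, Polynomial.eval₂_mul, Polynomial.eval₂_X_pow]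
      at hf
    exact (‹P.IsPrime›.mem_or_mem hf).resolve_left fun h => haP (‹P.IsPrime›.mem_of_pow_mem _ h)
  have hgQ : g.eval₂ φ a - φ (g.coeff 0) ∈ Q := by
    obtain ⟨u, hu⟩ := Polynomial.X_dvd_sub_C (p := g)
    have := congrArg (Polynomial.eval₂ φ a) hu
    rw [Polynomial.eval₂_sub, Polynomial.eval₂_C, Polynomial.eval₂_mul, Polynomial.eval₂_X]
      at this
    exact this ▸ Q.mul_mem_right _ haQ
  exact hXg (hy _ (by simpa [φ] using Q.sub_mem (hPQ hgP) hgQ))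

lemma algebraicIndependent_mk_of_chain {m : ℕ} (q : Fin (m + 1) → Ideal S)
    (hq : ∀ i, (q i).IsPrime) (hle : ∀ i : Fin m, q i.castSucc ≤ q i.succ) {a : Fin m → S}
    (haq : ∀ i, a i ∈ q i.succ) (ha : ∀ i, a i ∉ q i.castSucc) :
    AlgebraicIndependent k (Ideal.Quotient.mk (q 0) ∘ a) := by
  induction m with
  | zero => exact algebraicIndependent_empty_type
  | succ m ih =>
    have htail := ih (q ∘ Fin.succ) (fun i => hq i.succ) (fun i => hle i.succ)
      (fun i => haq i.succ) (fun i => ha i.succ)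
    rw [← Fin.cons_self_tail a]
    exact algebraicIndependent_mk_cons (hle 0) (haq 0) (ha 0) htail

end Chain

open MvPolynomial in
lemma AlgebraicIndependent.pow_le_finrank {k A : Type*} [Field k] [CommRing A] [Algebra k A]
    {m : ℕ} {x : Fin m → A} (hx : AlgebraicIndependent k x) (N : ℕ) (V : Submodule k A)
    [FiniteDimensional k V] (hV : ∀ e : Fin m → ℕ, (∀ i, e i ≤ N) → ∏ i, x i ^ e i ∈ V) :
    (N + 1) ^ m ≤ Module.finrank k V := by
  let exponent (e : Fin m → Fin (N + 1)) : Fin m →₀ ℕ :=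
    Finsupp.equivFunOnFinite.symm fun i => (e i : ℕ)
  have hexponent : Function.Injective exponent := fun e e' h => funext fun i =>
    Fin.val_injective (congrFun (Finsupp.equivFunOnFinite.symm.injective h) i)
  have hli : LinearIndependent k fun e : Fin m → Fin (N + 1) => ∏ i, x i ^ (e i : ℕ) := by
    have := ((basisMonomials (Fin m) k).linearIndependent.comp exponent hexponent).map'
      (aeval x).toLinearMap (LinearMap.ker_eq_bot.mpr hx)
    have heq : (fun e : Fin m → Fin (N + 1) => ∏ i, x i ^ (e i : ℕ)) =
        (aeval x).toLinearMap ∘ basisMonomials (Fin m) k ∘ exponent := by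
      ext e
      simp [exponent, aeval_monomial, Finsupp.prod_fintype]
    rwa [heq]
  calc (N + 1) ^ m = Module.finrank k (Submodule.span k (Set.range _)) := by
        rw [finrank_span_eq_card hli]; simp
    _ ≤ Module.finrank k V := Submodule.finrank_mono <|
        Submodule.span_le.mpr <| Set.range_subset_iff.mpr fun e => hV _ fun i => by omega

section Filtration

variable {k R : Type*} [Field k] [CommRing R] [Algebra k R]
variable (𝒜 : ℕ → Submodule k R)

def degLE (a : ℕ) : Submodule k R := ⨆ i : Fin (a + 1), 𝒜 i

variable {𝒜}

lemma mem_degLE_of_mem {n a : ℕ} (hna : n ≤ a) {r : R} (hr : r ∈ 𝒜 n) : r ∈ degLE 𝒜 a :=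
  Submodule.mem_iSup_of_mem (⟨n, by omega⟩ : Fin (a + 1)) hr

lemma degLE_mono {a b : ℕ} (hab : a ≤ b) : degLE 𝒜 a ≤ degLE 𝒜 b :=
  iSup_le fun i => le_iSup_of_le (⟨i, by omega⟩ : Fin (b + 1)) le_rfl

lemma finrank_degLE_le [∀ n, FiniteDimensional k (𝒜 n)] (a : ℕ) :
    Module.finrank k (degLE 𝒜 a) ≤ ∑ n ∈ Finset.range (a + 1), Module.finrank k (𝒜 n) := by
  classical
  rw [← Fin.sum_univ_eq_sum_range (fun n => Module.finrank k (𝒜 n)), degLE,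
    ← Finset.sup_univ_eq_iSup]
  induction (Finset.univ : Finset (Fin (a + 1))) using Finset.induction_on with
  | empty => simp
  | insert i s hi ih =>
    rw [Finset.sup_insert, Finset.sum_insert hi]
    exact (Submodule.finrank_add_le_finrank_add_finrank _ _).trans (by omega)

instance [∀ n, FiniteDimensional k (𝒜 n)] (a : ℕ) : FiniteDimensional k (degLE 𝒜 a) := by
  unfold degLE; infer_instance

variable [GradedAlgebra 𝒜]

lemma exists_forall_mem_degLE {ι : Type*} [Fintype ι] (x : ι → R) :
    ∃ D, ∀ i, x i ∈ degLE 𝒜 D := by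
  classical
  have hdeg (r : R) : ∃ D, r ∈ degLE 𝒜 D := by
    set s := (DirectSum.decompose 𝒜 r).support
    have hsum : ∑ n ∈ s, (DirectSum.decompose 𝒜 r n : R) ∈ degLE 𝒜 (s.sup id) :=
      Submodule.sum_mem _ fun n hn =>
        mem_degLE_of_mem (Finset.le_sup (f := id) hn) (DirectSum.decompose 𝒜 r n).2
    exact ⟨_, DirectSum.sum_support_decompose 𝒜 r ▸ hsum⟩
  choose D hD using fun i => hdeg (x i)
  exact ⟨Finset.univ.sup D, fun i => degLE_mono (Finset.le_sup (Finset.mem_univ i)) (hD i)⟩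

lemma degLE_mul_le (a b : ℕ) : degLE 𝒜 a * degLE 𝒜 b ≤ degLE 𝒜 (a + b) := by
  simp only [degLE, Submodule.iSup_mul, Submodule.mul_iSup, iSup_le_iff, Submodule.mul_le]
  intro i j x hx y hy
  exact mem_degLE_of_mem (by omega) (SetLike.mul_mem_graded hx hy)

lemma prod_pow_mem_degLE {ι : Type*} (s : Finset ι) {D : ℕ} {x : ι → R}
    (hx : ∀ i, x i ∈ degLE 𝒜 D) (e : ι → ℕ) :
    ∏ i ∈ s, x i ^ e i ∈ degLE 𝒜 (D * ∑ i ∈ s, e i) := by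
  classical
  have hpow (i : ι) (n : ℕ) : x i ^ n ∈ degLE 𝒜 (D * n) := by
    induction n with
    | zero =>
      rw [pow_zero, mul_zero]
      exact mem_degLE_of_mem le_rfl (SetLike.one_mem_graded 𝒜)
    | succ n ih =>
      rw [pow_succ, mul_add_one]
      exact degLE_mul_le _ _ (Submodule.mul_mem_mul ih (hx i))
  induction s using Finset.induction_on with
  | empty => exact mem_degLE_of_mem le_rfl (SetLike.one_mem_graded 𝒜)
  | insert j s hj ih =>
    rw [Finset.prod_insert hj, Finset.sum_insert hj, mul_add]
    exact degLE_mul_le _ _ (Submodule.mul_mem_mul (hpow j (e j)) ih)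

end Filtration

lemma LTSeries.length_le_of_hsBound {k R : Type*} [Field k] [CommRing R] [Algebra k R]
    (𝒜 : ℕ → Submodule k R) [GradedAlgebra 𝒜] [∀ n, FiniteDimensional k (𝒜 n)] {d : ℕ}
    (hs : HSBound (fun n => Module.finrank k (𝒜 n)) d) (c : LTSeries (PrimeSpectrum R)) :
    c.length ≤ d := by
  set m := c.length
  choose a haq ha using fun i : Fin m =>
    SetLike.exists_of_lt ((PrimeSpectrum.asIdeal_lt_asIdeal _ _).mpr (c.step i))
  have hind : AlgebraicIndependent k a :=
    .of_comp (Ideal.Quotient.mkₐ k _) <| algebraicIndependent_mk_of_chain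
      (fun i => (c i).asIdeal) (fun i => (c i).isPrime) (fun i => (c.step i).le) haq ha
  obtain ⟨D, hD⟩ := exists_forall_mem_degLE (𝒜 := 𝒜) a
  obtain ⟨K, hK⟩ := hs.exists_sum_range_le
  refine le_of_forall_pow_le_mul_pow (K := K * (D * m + 1) ^ d) fun N => ?_
  have hmonomial (e : Fin m → ℕ) (he : ∀ i, e i ≤ N) :
      ∏ i, a i ^ e i ∈ degLE 𝒜 (D * (m * N)) := by
    have hsum : ∑ i, e i ≤ m * N := by
      simpa using Finset.sum_le_card_nsmul Finset.univ e N fun i _ => he i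
    exact degLE_mono (Nat.mul_le_mul_left D hsum) (prod_pow_mem_degLE Finset.univ hD e)
  calc (N + 1) ^ m ≤ Module.finrank k (degLE 𝒜 (D * (m * N))) :=
        hind.pow_le_finrank N _ hmonomial
    _ ≤ ∑ n ∈ Finset.range (D * (m * N) + 1), Module.finrank k (𝒜 n) := finrank_degLE_le _
    _ ≤ K * (D * (m * N) + 1) ^ d := hK _
    _ ≤ K * (D * m + 1) ^ d * (N + 1) ^ d := by
        rw [mul_assoc, ← mul_pow]
        gcongr
        nlinarith [Nat.zero_le (D * m), Nat.zero_le N]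

theorem ringKrullDim_le_hsDim_general {k R : Type*} [Field k] [CommRing R] [Algebra k R]
    (𝒜 : ℕ → Submodule k R) [GradedAlgebra 𝒜]
    (hHS : IsHilbertSerre 𝒜) :
    ringKrullDim R ≤ (hsDim 𝒜 : WithBot ℕ∞) := by
  obtain ⟨hfd, d, hd⟩ := hHS
  have hmin : HSBound (fun n => Module.finrank k (𝒜 n)) (hsDim 𝒜) :=
    Nat.sInf_mem (s := {d | HSBound (fun n => Module.finrank k (𝒜 n)) d}) ⟨d, hd⟩
  exact iSup_le fun c => by exact_mod_cast LTSeries.length_le_of_hsBound 𝒜 hmin c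

/-- for a Hilbert–Serre ring `R` (not necessarily a domain), the Krull
dimension of `R` is at most the Hilbert–Serre dimension `d(R)`. -/
theorem ringKrullDim_le_hsDim {k R : Type*} [Field k] [CommRing R] [Algebra k R]
    (𝒜 : ℕ → Submodule k R) [GradedAlgebra 𝒜] (h0 : 𝒜 0 = 1)
    (hHS : IsHilbertSerre 𝒜) :
    ringKrullDim R ≤ (hsDim 𝒜 : WithBot ℕ∞) :=
  ringKrullDim_le_hsDim_general 𝒜 hHS
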